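/- Let R be a commutative ring, R⟪X⟫ the algebra of generalized finite formal Laurent series over R, and f ∈ R⟪X⟫ with minimal support element α such that f(α) is a unit. Then f is invertible in R⟪X⟫ with inverse supported in [-α, ∞). -/

import Mathlib

/-- A subset of ℝ is discrete iff it has no limit (accumulation) points in ℝ. -/
def DiscreteSubset (A : Set ℝ) : Prop := ∀ x : ℝ, ¬ AccPt x (Filter.principal A)

/-- Membership in the algebra R⟪X⟫: discrete support bounded from below. -/
def DBBSupp {R : Type*} [CommRing R] (f : ℝ → R) : Prop :=
  DiscreteSubset (Function.support f) ∧ BddBelow (Function.support f)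

/-- The Cauchy product (f·g)(m) = Σ_{p+q=m} f(p)g(q). -/
noncomputable def cauchy {R : Type*} [CommRing R] (f g : ℝ → R) : ℝ → R :=
  fun m => ∑ᶠ p : ℝ, f p * g (m - p)

open Classical in
/-- The identity X⁰ of R⟪X⟫: value 1 at 0 and 0 elsewhere. -/
noncomputable def oneX {R : Type*} [CommRing R] : ℝ → R :=
  fun m => if m = 0 then 1 else 0

/-!
Normalize `f` to `X^{-α} f(α)⁻¹ f = 1 - z`, where `z` is supported in the positive part `D` of
`supp f - α`. As a Hahn series, `1 - z` is inverted by the geometric series `∑ zⁿ`, whose support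
lies in the additive monoid generated by `D`. Since `D` is discrete and bounded below, `D` meets
`(-∞, T]` in a finite set `E`, and an element `∑ₑ aₑ e ≤ T` of that monoid has `e ∈ E` and
`aₑ ≤ T / e`; so the monoid, hence the inverse's support, is again discrete and bounded below.
-/

open Function Set HahnSeries

def LocallyFiniteBelow {α : Type*} [Preorder α] (s : Set α) : Prop :=
  ∀ T, (s ∩ Iic T).Finite

namespace LocallyFiniteBelow

section Preorder

variable {α : Type*} [Preorder α] {s t : Set α}

theorem mono (ht : LocallyFiniteBelow t) (hst : s ⊆ t) : LocallyFiniteBelow s :=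
  fun T => (ht T).subset (inter_subset_inter_left _ hst)

theorem isWF (hs : LocallyFiniteBelow s) : s.IsWF := by
  rw [isWF_iff_no_descending_seq]
  intro g hg hmem
  exact Set.infinite_of_injective_forall_mem (s := s ∩ Iic (g 0)) hg.injective
    (fun n => ⟨hmem n, hg.antitone n.zero_le⟩) (hs (g 0))

end Preorder

theorem preimage_add_const {α : Type*} [AddCommGroup α] [PartialOrder α] [IsOrderedAddMonoid α]
    {s : Set α} (hs : LocallyFiniteBelow s) (c : α) : LocallyFiniteBelow ((· + c) ⁻¹' s) := by
  intro T
  refine ((hs (T + c)).preimage (add_left_injective c).injOn).subset ?_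
  rintro x ⟨hx, hxT⟩
  exact ⟨hx, (add_le_add_iff_right c).2 hxT⟩

end LocallyFiniteBelow

theorem locallyFiniteBelow_iff_discreteSubset_and_bddBelow {s : Set ℝ} :
    LocallyFiniteBelow s ↔ DiscreteSubset s ∧ BddBelow s := by
  constructor
  · intro hs
    refine ⟨fun x hx => ?_, ?_⟩
    · -- near `x`, the only candidates are the finitely many points of `s` below `x + 1`
      have hfin : ((s ∩ Iic (x + 1)) \ {x}).Finite := (hs (x + 1)).sdiff
      have hU : Iio (x + 1) ∩ ((s ∩ Iic (x + 1)) \ {x})ᶜ ∈ nhds x :=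
        Filter.inter_mem (Iio_mem_nhds (by linarith))
          (hfin.isClosed.isOpen_compl.mem_nhds fun h => h.2 rfl)
      obtain ⟨y, ⟨⟨hy1, hy2⟩, hys⟩, hyx⟩ := accPt_iff_nhds.1 hx _ hU
      exact hy2 ⟨⟨hys, (mem_Iio.1 hy1).le⟩, hyx⟩
    · rw [← inter_union_compl s (Iic 0)]
      exact (hs 0).bddBelow.union ⟨0, fun x hx => le_of_lt (not_le.1 hx.2)⟩
  · rintro ⟨hd, b, hb⟩ T
    by_contra hinf
    obtain ⟨x, -, hx⟩ := Set.Infinite.exists_accPt_of_subset_isCompact hinf isCompact_Icc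
      (fun x hx => ⟨hb hx.1, hx.2⟩ : s ∩ Iic T ⊆ Icc b T)
    exact hd x (hx.mono (Filter.principal_mono.2 inter_subset_left))

theorem dbbSupp_iff_locallyFiniteBelow {R : Type*} [CommRing R] {f : ℝ → R} :
    DBBSupp f ↔ LocallyFiniteBelow (support f) :=
  locallyFiniteBelow_iff_discreteSubset_and_bddBelow.symm

namespace AddSubmonoid

variable {M : Type*} [AddCommMonoid M] [PartialOrder M] [IsOrderedAddMonoid M] {D : Set M}

theorem closure_subset_Ici_zero (hD : D ⊆ Ici 0) : (closure D : Set M) ⊆ Ici 0 := by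
  intro x hx
  induction hx using closure_induction with
  | mem y hy => exact hD hy
  | zero => exact le_rfl
  | add a b _ _ ha hb => exact add_nonneg ha hb

theorem mem_closure_inter_Iic (hD : D ⊆ Ici 0) {x T : M} (hx : x ∈ closure D) (hxT : x ≤ T) :
    x ∈ closure (D ∩ Iic T) := by
  induction hx using closure_induction with
  | mem y hy => exact subset_closure ⟨hy, hxT⟩
  | zero => exact zero_mem _
  | add a b ha hb iha ihb =>
    exact add_mem (iha ((le_add_of_nonneg_right (closure_subset_Ici_zero hD hb)).trans hxT))
      (ihb ((le_add_of_nonneg_left (closure_subset_Ici_zero hD ha)).trans hxT))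

end AddSubmonoid

theorem LocallyFiniteBelow.addSubmonoid_closure {D : Set ℝ} (hD : LocallyFiniteBelow D)
    (hpos : D ⊆ Ioi 0) : LocallyFiniteBelow (AddSubmonoid.closure D : Set ℝ) := by
  classical
  intro T
  set E : Finset ℝ := (hD T).toFinset
  have hE : ∀ e : E, 0 < (e : ℝ) := fun e => hpos ((hD T).mem_toFinset.1 e.2).1
  have hsub : (AddSubmonoid.closure D : Set ℝ) ∩ Iic T ⊆
      (fun a : E → ℕ => ∑ e, a e • (e : ℝ)) '' Iic (fun e => ⌊T / e⌋₊) := by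
    rintro x ⟨hx, hxT⟩
    have hxE : x ∈ AddSubmonoid.closure (E : Set ℝ) := by
      rw [(hD T).coe_toFinset]
      exact AddSubmonoid.mem_closure_inter_Iic (hpos.trans Ioi_subset_Ici_self) hx hxT
    obtain ⟨a, rfl⟩ := AddSubmonoid.mem_closure_finset'.1 hxE
    refine ⟨a, fun e => Nat.le_floor ((le_div_iff₀ (hE e)).2 ?_), rfl⟩
    calc (a e : ℝ) * e = a e • (e : ℝ) := (nsmul_eq_mul _ _).symm
      _ ≤ ∑ e, a e • (e : ℝ) := Finset.single_le_sum
          (fun e _ => nsmul_nonneg (hE e).le _) (Finset.mem_univ e)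
      _ ≤ T := hxT
  exact ((finite_Iic _).image _).subset hsub

namespace HahnSeries

theorem order_eq_of_isLeast {Γ R : Type*} [Zero Γ] [LinearOrder Γ] [Zero R] {x : R⟦Γ⟧} {a : Γ}
    (h : IsLeast x.support a) : x.order = a :=
  le_antisymm (order_le_of_coeff_ne_zero h.1)
    (h.2 (coeff_order_eq_zero.not.2 (ne_zero_of_coeff_ne_zero h.1)))

variable {Γ R : Type*} [AddCommGroup Γ] [LinearOrder Γ] [IsOrderedAddMonoid Γ] [CommRing R]

theorem exists_mul_eq_one_support_subset {x : R⟦Γ⟧} (hx : IsUnit x.leadingCoeff) :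
    ∃ y : R⟦Γ⟧, x * y = 1 ∧ y.support ⊆
      (· + x.order) ⁻¹' AddSubmonoid.closure ((· + x.order) ⁻¹' x.support ∩ Ioi 0) := by
  obtain ⟨r, hr⟩ := hx.exists_left_inv
  set z := 1 - single (-x.order) r * x
  have hz : 0 < z.orderTop := unit_aux x hr _ (neg_add_cancel _)
  have hz_support : z.support ⊆ (· + x.order) ⁻¹' x.support ∩ Ioi 0 := by
    intro g hg
    have hg_pos : 0 < g := by
      by_contra! hle
      exact hg (coeff_eq_zero_of_lt_orderTop (lt_of_le_of_lt (WithTop.coe_le_coe.2 hle) hz))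
    rw [mem_support, coeff_sub, coeff_one, if_neg hg_pos.ne', coeff_single_mul, sub_neg_eq_add,
      zero_sub, neg_ne_zero] at hg
    exact ⟨right_ne_zero_of_mul hg, hg_pos⟩
  refine ⟨single (-x.order) r * (SummableFamily.powers z).hsum, ?_, fun g hg => ?_⟩
  · rw [← SummableFamily.one_sub_self_mul_hsum_powers hz, sub_sub_cancel, mul_left_comm, mul_assoc]
  · rw [mem_support, coeff_single_mul, sub_neg_eq_add] at hg
    obtain ⟨n, hn⟩ := mem_iUnion.1 (SummableFamily.support_hsum_subset (right_ne_zero_of_mul hg))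
    rw [SummableFamily.coe_powers hz] at hn
    exact AddSubmonoid.closure_mono hz_support (SummableFamily.support_pow_subset_closure z n hn)

end HahnSeries

theorem cauchy_coeff_eq_coeff_mul {R : Type*} [CommRing R] (x y : HahnSeries ℝ R) :
    cauchy x.coeff y.coeff = (x * y).coeff := by
  ext m
  set s := Finset.antidiagonal x.isPWO_support y.isPWO_support m
  have hs : ∀ ij ∈ s, ij.2 = m - ij.1 := fun ij hij => by
    rw [← (Finset.mem_antidiagonal.1 hij).2.2]; ring
  rw [cauchy, coeff_mul, finsum_eq_sum_of_support_subset (s := s.image Prod.fst),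
    Finset.sum_image]
  · exact Finset.sum_congr rfl fun ij hij => by rw [hs ij hij]
  · exact fun ij hij kl hkl h => Prod.ext h (by rw [hs ij hij, hs kl hkl, h])
  · intro p hp
    refine Finset.mem_coe.2 (Finset.mem_image.2 ⟨(p, m - p), Finset.mem_antidiagonal.2
      ⟨left_ne_zero_of_mul hp, right_ne_zero_of_mul hp, add_sub_cancel p m⟩, rfl⟩)

theorem coeff_one_eq_oneX {R : Type*} [CommRing R] : (1 : HahnSeries ℝ R).coeff = oneX := by
  ext m
  simp [coeff_one, oneX]

/-- an element f of R⟪X⟫ whose minimal support element α carries a unit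
coefficient is invertible in R⟪X⟫, with inverse supported in [-α, ∞). -/
theorem laurent_inverse_general {R : Type*} [CommRing R] (f : ℝ → R) (α : ℝ)
    (hf : DBBSupp f) (hmin : IsLeast (Function.support f) α)
    (hunit : IsUnit (f α)) :
    ∃ g : ℝ → R, DBBSupp g ∧ Function.support g ⊆ Set.Ici (-α) ∧
      cauchy f g = oneX ∧ cauchy g f = oneX := by
  have hf_lfb := dbbSupp_iff_locallyFiniteBelow.1 hf
  let F : HahnSeries ℝ R := ⟨f, hf_lfb.isWF.isPWO⟩
  have hF_order : F.order = α := order_eq_of_isLeast hmin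
  obtain ⟨G, hFG, hG⟩ := exists_mul_eq_one_support_subset (x := F)
    (by rwa [leadingCoeff_eq, hF_order])
  rw [hF_order] at hG
  set D := (· + α) ⁻¹' support f ∩ Ioi 0
  have hD_closure : LocallyFiniteBelow (AddSubmonoid.closure D : Set ℝ) :=
    ((hf_lfb.preimage_add_const α).mono inter_subset_left).addSubmonoid_closure inter_subset_right
  refine ⟨G.coeff, dbbSupp_iff_locallyFiniteBelow.2 ((hD_closure.preimage_add_const α).mono hG),
    fun g hg => ?_, ?_, ?_⟩
  · have hnonneg := AddSubmonoid.closure_subset_Ici_zero (inter_subset_right.trans Ioi_subset_Ici_self)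
      (hG hg)
    simp only [mem_Ici] at hnonneg ⊢
    linarith
  · rw [show f = F.coeff from rfl, cauchy_coeff_eq_coeff_mul, hFG, coeff_one_eq_oneX]
  · rw [show f = F.coeff from rfl, cauchy_coeff_eq_coeff_mul, mul_comm, hFG, coeff_one_eq_oneX]
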